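/- arXiv:0807.3240 — 3 statements merged into one kernel-verified Lean document; each statement's English description precedes it below -/
import Mathlib

section
/- Let k be a field. Then the Novikov ring Nov_k is a field. -/
/-- The Novikov condition: for every `c ∈ ℝ` the set of exponents `γ > c`
with nonzero coefficient is finite. -/
def NovCond (k : Type) [Zero k] (x : ℝ → k) : Prop :=
  ∀ c : ℝ, {γ : ℝ | x γ ≠ 0 ∧ c < γ}.Finite

/-- The underlying set of the Novikov ring `Nov_k`: formal series
`Σ_γ x(γ)·t^γ` satisfying the Novikov finiteness condition. -/
def Nov (k : Type) [Zero k] : Type :=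
  {x : ℝ → k // NovCond k x}

/-! Reflecting `ℝ` turns the Novikov condition into finiteness of every lower tail
`supp x ∩ Iio c` in `ℝᵒᵈ`, so `Nov_k` is a subring of the Hahn series field `k⟦ℝᵒᵈ⟧`, with the
same operations. It is closed under inversion: after normalising the leading term,
`x = r tᵃ (1 - y)` with `supp y` positive, and `(1 - y)⁻¹ = ∑ yⁿ`. As `supp yⁿ` lies above
`n • order y`, an Archimedean bound shows that below any `c` only finitely many `yⁿ` contribute,
each with finitely many exponents. -/

open Set Pointwise HahnSeries

namespace Set

variable {Γ : Type*}

section LinearOrder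

variable [LinearOrder Γ] {s t : Set Γ}

def FiniteBelow (s : Set Γ) : Prop := ∀ c, (s ∩ Iio c).Finite

theorem FiniteBelow.mono (h : s ⊆ t) (ht : t.FiniteBelow) : s.FiniteBelow :=
  fun c => (ht c).subset (inter_subset_inter_left _ h)

theorem FiniteBelow.union (hs : s.FiniteBelow) (ht : t.FiniteBelow) : (s ∪ t).FiniteBelow :=
  fun c => by rw [union_inter_distrib_right]; exact (hs c).union (ht c)

theorem Finite.finiteBelow (hs : s.Finite) : s.FiniteBelow :=
  fun _ => hs.inter_of_left _

theorem FiniteBelow.isWF (hs : s.FiniteBelow) : s.IsWF := by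
  rw [isWF_iff_no_descending_seq]
  intro f hf hmem
  refine infinite_range_of_injective (hf.injective.comp Nat.succ_injective) ((hs (f 0)).subset ?_)
  rintro _ ⟨n, rfl⟩
  exact ⟨hmem _, hf n.succ_pos⟩

theorem FiniteBelow.isPWO (hs : s.FiniteBelow) : s.IsPWO := hs.isWF.isPWO

theorem FiniteBelow.bddBelow [Nonempty Γ] (hs : s.FiniteBelow) : BddBelow s := by
  obtain ⟨c⟩ := ‹Nonempty Γ›
  refine ((hs c).bddBelow.union (bddBelow_Ici (a := c))).mono fun γ hγ => ?_
  rcases lt_or_ge γ c with h | h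
  exacts [Or.inl ⟨hγ, h⟩, Or.inr h]

end LinearOrder

variable [AddCommGroup Γ] [LinearOrder Γ] [IsOrderedAddMonoid Γ] {s t : Set Γ}

theorem FiniteBelow.add (hs : s.FiniteBelow) (ht : t.FiniteBelow) : (s + t).FiniteBelow := by
  intro c
  obtain ⟨a₀, ha₀⟩ := hs.bddBelow
  obtain ⟨b₀, hb₀⟩ := ht.bddBelow
  refine (((hs (c - b₀)).prod (ht (c - a₀))).image fun p => p.1 + p.2).subset ?_
  rintro _ ⟨⟨a, ha, b, hb, rfl⟩, hc⟩
  refine ⟨(a, b), ⟨⟨ha, lt_sub_iff_add_lt.2 ?_⟩, ⟨hb, lt_sub_iff_add_lt'.2 ?_⟩⟩, rfl⟩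
  exacts [(add_le_add_right (hb₀ hb) a).trans_lt hc, (add_le_add_left (ha₀ ha) b).trans_lt hc]

theorem finiteBelow_iUnion_of_nsmul_le [Archimedean Γ] {t : ℕ → Set Γ}
    (ht : ∀ n, (t n).FiniteBelow) {ε : Γ} (hε : 0 < ε) (hle : ∀ n, ∀ γ ∈ t n, n • ε ≤ γ) :
    (⋃ n, t n).FiniteBelow := by
  intro c
  obtain ⟨N, hN⟩ := Archimedean.arch c hε
  refine ((finite_lt_nat N).biUnion fun n _ => ht n c).subset ?_
  rintro γ ⟨hγ, hγc⟩
  obtain ⟨n, hn⟩ := mem_iUnion.1 hγ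
  refine mem_biUnion (x := n) ?_ ⟨hn, hγc⟩
  by_contra! hNn
  have := nsmul_le_nsmul_left hε.le (not_lt.1 hNn)
  exact (hle n γ hn).not_gt (hγc.trans_le (hN.trans this))

end Set

namespace HahnSeries

variable {Γ R : Type*}

theorem coeff_mul_eq_finsum [AddCommMonoid Γ] [PartialOrder Γ] [IsOrderedCancelAddMonoid Γ]
    [NonUnitalNonAssocSemiring R] (x y : R⟦Γ⟧) (g : Γ) :
    (x * y).coeff g = ∑ᶠ (p : Γ × Γ) (_ : p.1 + p.2 = g), x.coeff p.1 * y.coeff p.2 := by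
  rw [coeff_mul]
  symm
  apply finsum_mem_eq_sum_of_inter_support_eq
  ext ⟨a, b⟩
  simp only [mem_inter_iff, Function.mem_support, Finset.mem_coe, Finset.mem_antidiagonal]
  exact ⟨fun ⟨hab, hne⟩ => ⟨⟨left_ne_zero_of_mul hne, right_ne_zero_of_mul hne, hab⟩, hne⟩,
    fun ⟨⟨_, _, hab⟩, hne⟩ => ⟨hab, hne⟩⟩

variable [AddCommGroup Γ] [LinearOrder Γ] [IsOrderedAddMonoid Γ]

variable (Γ R) in
def novikovSubring [Ring R] : Subring R⟦Γ⟧ where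
  carrier := {x | x.support.FiniteBelow}
  zero_mem' := by simpa only [mem_ofPred_eq, support_zero] using (finite_empty (α := Γ)).finiteBelow
  one_mem' := (finite_singleton 0).finiteBelow.mono support_single_subset
  add_mem' hx hy := (hx.union hy).mono (support_add_subset _ _)
  neg_mem' hx := by simpa only [mem_ofPred_eq, support_neg] using hx
  mul_mem' hx hy := (hx.add hy).mono support_mul_subset

theorem single_mem_novikovSubring [Ring R] (a : Γ) (r : R) : single a r ∈ novikovSubring Γ R :=
  (finite_singleton a).finiteBelow.mono support_single_subset

theorem hsum_powers_mem_novikovSubring [CommRing R] [NoZeroDivisors R] [Archimedean Γ]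
    {y : R⟦Γ⟧} (hy : y ∈ novikovSubring Γ R) :
    (SummableFamily.powers y).hsum ∈ novikovSubring Γ R := by
  obtain rfl | hy0 := eq_or_ne y 0
  · rw [SummableFamily.powers_zero, SummableFamily.hsum_single]
    exact one_mem _
  by_cases hpos : 0 < y.orderTop
  swap
  · rw [SummableFamily.powers_of_not_orderTop_pos hpos, SummableFamily.hsum_single]
    exact one_mem _
  refine FiniteBelow.mono SummableFamily.support_hsum_subset ?_
  rw [SummableFamily.coe_powers hpos]
  refine finiteBelow_iUnion_of_nsmul_le (pow_mem hy) ((zero_lt_orderTop_iff hy0).1 hpos)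
    fun n γ hγ => ?_
  rw [← order_pow]
  exact order_le_of_coeff_ne_zero hγ

theorem inv_mem_novikovSubring [Field R] [Archimedean Γ] {x : R⟦Γ⟧}
    (hx : x ∈ novikovSubring Γ R) : x⁻¹ ∈ novikovSubring Γ R := by
  rw [inv_def]
  exact mul_mem (single_mem_novikovSubring _ _) (hsum_powers_mem_novikovSubring
    (sub_mem (one_mem _) (mul_mem (single_mem_novikovSubring _ _) hx)))

variable (Γ R) in
def novikovSubfield [Field R] [Archimedean Γ] : Subfield R⟦Γ⟧ :=
  { novikovSubring Γ R with inv_mem' := fun _ => inv_mem_novikovSubring }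

end HahnSeries

theorem NovCond.finiteBelow {k : Type} [Zero k] {x : ℝ → k} (hx : NovCond k x) :
    (Function.support (x ∘ OrderDual.ofDual)).FiniteBelow := hx

def novEquiv (k : Type) [Field k] : Nov k ≃ HahnSeries.novikovSubfield ℝᵒᵈ k where
  toFun x := ⟨⟨x.1 ∘ OrderDual.ofDual, x.2.finiteBelow.isPWO⟩, x.2⟩
  invFun z := ⟨z.1.coeff ∘ OrderDual.toDual, z.2⟩
  left_inv _ := rfl
  right_inv _ := rfl

/-- **Novikov ring over a field is a field.**  Let `k` be a field.  Then the
Novikov ring `Nov_k` is a field: there is a field structure on `Nov k` whose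
addition is pointwise, whose multiplication is convolution
`(x·y)(γ) = Σ_{γ₁+γ₂=γ} x(γ₁)·y(γ₂)`, and whose unit is the indicator
function of `0 ∈ ℝ`. -/
theorem novikov_ring_over_field_is_field (k : Type) [Field k] :
    ∃ F : Field (Nov k),
      letI : Field (Nov k) := F
      (∀ x y : Nov k, (x + y).1 = fun γ => x.1 γ + y.1 γ) ∧
      (∀ (x y : Nov k) (γ : ℝ),
        (x * y).1 γ = ∑ᶠ (p : ℝ × ℝ) (_ : p.1 + p.2 = γ), x.1 p.1 * y.1 p.2) ∧
      ((1 : Nov k).1 = fun γ => if γ = 0 then (1 : k) else 0) ∧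
      ((0 : Nov k).1 = fun _ => (0 : k)) := by
  refine ⟨(novEquiv k).field, fun _ _ => rfl, fun x y γ => ?_, ?_, rfl⟩
  · exact HahnSeries.coeff_mul_eq_finsum _ _ _
  · funext γ
    show (1 : HahnSeries ℝᵒᵈ k).coeff (OrderDual.toDual γ) = _
    simp [HahnSeries.coeff_one]
end

section
/- Let X be a locally path-connected topological space and let ω = {f_U}_{U ∈ 𝒰} be a continuous closed 1-form on X. Then there exists a continuous function f : X → ℝ with ω = df (meaning f − f_U is locally constant on U for every U ∈ 𝒰) if and only if ∫_γ ω = 0 for every continuous loop γ : [0,1] → X with γ(0) = γ(1). -/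
open Set

/-- A continuous closed 1-form on a topological space `X`: a collection of
continuous real-valued functions `f i : U i → ℝ` indexed by an open cover
`{U i}` of `X`, such that on overlaps the differences `f i − f j` are locally
constant.  (The functions are recorded as total functions `X → ℝ`; only their
restrictions to `U i` matter.) -/
structure ClosedOneForm (X : Type) [TopologicalSpace X] : Type 1 where
  ι : Type
  U : ι → Set X
  isOpen : ∀ i, IsOpen (U i)
  covers : ∀ x : X, ∃ i, x ∈ U i
  f : ι → X → ℝ
  cont : ∀ i, ContinuousOn (f i) (U i)
  locConst : ∀ i j, ∀ x ∈ U i ∩ U j, ∃ W, IsOpen W ∧ x ∈ W ∧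
    ∀ y ∈ W ∩ (U i ∩ U j), f i y - f j y = f i x - f j x

namespace ClosedOneForm

variable {X Y : Type} [TopologicalSpace X] [TopologicalSpace Y]

/-- `r` is a value of the line integral `∫_γ ω` of the closed 1-form `ω` over
the path `γ : [a,b] → X`: there is a partition `a = t₀ ≤ ⋯ ≤ t_n = b` with
`γ([t_m, t_{m+1}]) ⊆ U (idx m)` and
`r = Σ_m (f (idx m) (γ t_{m+1}) − f (idx m) (γ t_m))`. -/
def IsPathIntegral (ω : ClosedOneForm X) (γ : ℝ → X) (a b r : ℝ) : Prop :=
  ∃ (n : ℕ) (t : ℕ → ℝ) (idx : ℕ → ω.ι),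
    t 0 = a ∧ t n = b ∧ (∀ m < n, t m ≤ t (m + 1)) ∧
    (∀ m < n, ∀ s ∈ Set.Icc (t m) (t (m + 1)), γ s ∈ ω.U (idx m)) ∧
    r = ∑ m ∈ Finset.range n, (ω.f (idx m) (γ (t (m + 1))) - ω.f (idx m) (γ (t m)))

open scoped Classical in
/-- The line integral `∫_γ ω` over `γ : [a,b] → X` (its value is independent
of all choices; it is defined, via choice, as the common value computed from
any admissible partition). -/
noncomputable def pathIntegral (ω : ClosedOneForm X) (γ : ℝ → X) (a b : ℝ) : ℝ :=
  if h : ∃ r, ω.IsPathIntegral γ a b r then h.choose else 0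

/-- A subset `A ⊆ X` is `N`-movable with respect to `ω` if there is a homotopy
`H : A × [0,1] → X` with `H(a,0) = a` and `∫_{t ↦ H(a,t)} ω ≤ −N` for all `a ∈ A`. -/
def NMovable (ω : ClosedOneForm X) (A : Set X) (N : ℝ) : Prop :=
  ∃ H : X × ℝ → X, ContinuousOn H (A ×ˢ Set.Icc (0 : ℝ) 1) ∧
    (∀ a ∈ A, H (a, 0) = a) ∧
    ∀ a ∈ A, ω.pathIntegral (fun t => H (a, t)) 0 1 ≤ -N

end ClosedOneForm

/-- The inclusion of `V` into `X` is null-homotopic. -/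
def NullhomotopicIn (X : Type) [TopologicalSpace X] (V : Set X) : Prop :=
  ∃ (H : X × ℝ → X) (x₀ : X), ContinuousOn H (V ×ˢ Set.Icc (0 : ℝ) 1) ∧
    (∀ v ∈ V, H (v, 0) = v) ∧ (∀ v ∈ V, H (v, 1) = x₀)

/-- `cat_X(A) ≤ k`: the subset `A` can be covered by `k` open subsets of `X`,
each null-homotopic in `X`. -/
def CatLE (X : Type) [TopologicalSpace X] (A : Set X) (k : ℕ) : Prop :=
  ∃ V : Fin k → Set X, (∀ i, IsOpen (V i)) ∧ A ⊆ ⋃ i, V i ∧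
    ∀ i, NullhomotopicIn X (V i)

/-- `cat_X(A)`, the Lusternik–Schnirelmann category of `A` in `X`. -/
noncomputable def catSet (X : Type) [TopologicalSpace X] (A : Set X) : ℕ :=
  sInf {k | CatLE X A k}

/-- `cat(X)`, the Lusternik–Schnirelmann category of `X`. -/
noncomputable def catSpace (X : Type) [TopologicalSpace X] : ℕ :=
  catSet X Set.univ

namespace ClosedOneForm

/-- `cat(X, ω)`: the minimal `k` such that for every `N > 0` there is a closed
subset `A ⊆ X`, `N`-movable with respect to `ω`, with `cat_X(X − A) ≤ k`. -/
noncomputable def catForm {X : Type} [TopologicalSpace X] (ω : ClosedOneForm X) : ℕ :=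
  sInf {k | ∀ N : ℝ, 0 < N →
    ∃ A : Set X, IsClosed A ∧ ω.NMovable A N ∧ CatLE X Aᶜ k}

end ClosedOneForm

/-! If `ω = df`, then along any path `γ` the function `f ∘ γ` is a primitive of `γ^*ω`, i.e. a
function `Φ` on the parameter interval with `Φ - f_i ∘ γ` locally constant wherever `γ ∈ U_i`;
every partition sum of `∫_γ ω` then telescopes to `Φ b - Φ a`, which vanishes on loops.

Conversely, along any path a primitive `Φ` exists (glue the local primitives `f_i ∘ γ` along a
Lebesgue partition) and is unique up to a constant because the parameter interval is connected.
So `∫_γ ω = Φ b - Φ a` is well defined, additive under concatenation and odd under reversal.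
Integrating from a base point of each path component gives `F : X → ℝ`. For `y` joined to `x`
inside `U_i` (such `y` form a neighbourhood of `x` since `X` is locally path-connected), the loop
through the base point, `x` and `y` has integral `0`, so `F y - F x = f_i y - f_i x`: hence
`F - f_i` is locally constant on `U_i`. -/

open Set Filter Topology

theorem IsPreconnected.apply_eq_of_eventually_eq {α β : Type*} [TopologicalSpace α] {S : Set α}
    {g : α → β} (hS : IsPreconnected S) (hg : ∀ x ∈ S, ∀ᶠ y in 𝓝[S] x, g y = g x) {x y : α}
    (hx : x ∈ S) (hy : y ∈ S) : g x = g y := by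
  have := isPreconnected_iff_preconnectedSpace.mp hS
  have hloc : IsLocallyConstant (S.domRestrict g) := (IsLocallyConstant.iff_eventually_eq _).2
    fun z => (eventually_nhds_subtype_iff S z (fun y => g y = g z)).2 (hg z z.2)
  exact hloc.apply_eq_of_preconnectedSpace ⟨x, hx⟩ ⟨y, hy⟩

namespace ClosedOneForm

variable {X : Type} [TopologicalSpace X] {ω : ClosedOneForm X}

/-- `dg = ω` on `V`. -/
def IsPrimitiveOn (ω : ClosedOneForm X) (g : X → ℝ) (V : Set X) : Prop :=
  ∀ i, ∀ x ∈ V ∩ ω.U i, ∀ᶠ y in 𝓝[V ∩ ω.U i] x, g y - ω.f i y = g x - ω.f i x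

/-- `Φ` is a primitive of the pull-back `γ^*ω` on `S`. -/
def IsPrimitiveAlong (ω : ClosedOneForm X) (Φ : ℝ → ℝ) (γ : ℝ → X) (S : Set ℝ) : Prop :=
  ∀ s ∈ S, ∀ i, γ s ∈ ω.U i → ∀ᶠ s' in 𝓝[S] s, Φ s' - ω.f i (γ s') = Φ s - ω.f i (γ s)

section IsPrimitiveOn

variable {g : X → ℝ} {V : Set X}

theorem isPrimitiveOn_f (i : ω.ι) : ω.IsPrimitiveOn (ω.f i) (ω.U i) := by
  intro j x hx
  obtain ⟨W, hWo, hxW, hW⟩ := ω.locConst i j x hx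
  exact mem_nhdsWithin.2 ⟨W, hWo, hxW, fun y hy => hW y hy⟩

theorem isPrimitiveOn_univ_iff :
    ω.IsPrimitiveOn g univ ↔ ∀ i, ∀ x ∈ ω.U i, ∃ W, IsOpen W ∧ x ∈ W ∧
      ∀ y ∈ W ∩ ω.U i, g y - ω.f i y = g x - ω.f i x := by
  simp only [IsPrimitiveOn, univ_inter, Filter.Eventually, mem_nhdsWithin]
  rfl

theorem IsPrimitiveOn.continuousOn (hg : ω.IsPrimitiveOn g V) (hV : IsOpen V) :
    ContinuousOn g V := by
  intro x hx
  obtain ⟨i, hi⟩ := ω.covers x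
  have hloc : (fun y => ω.f i y + (g x - ω.f i x)) =ᶠ[𝓝 x] g := by
    rw [← (hV.inter (ω.isOpen i)).nhdsWithin_eq ⟨hx, hi⟩]
    filter_upwards [hg i x ⟨hx, hi⟩] with y hy
    linarith
  exact ((((ω.cont i).continuousAt ((ω.isOpen i).mem_nhds hi)).add
    continuousAt_const).congr hloc).continuousWithinAt

theorem IsPrimitiveOn.isPrimitiveAlong_comp {γ : ℝ → X} {S : Set ℝ} (hg : ω.IsPrimitiveOn g V)
    (hγ : ContinuousOn γ S) (hmaps : MapsTo γ S V) : ω.IsPrimitiveAlong (g ∘ γ) γ S := by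
  intro s hs i hi
  have htends : Tendsto γ (𝓝[S] s) (𝓝[V ∩ ω.U i] (γ s)) := by
    refine tendsto_nhdsWithin_iff.2 ⟨hγ s hs, ?_⟩
    filter_upwards [self_mem_nhdsWithin, hγ s hs ((ω.isOpen i).mem_nhds hi)] with s' hs' hs'U
    exact ⟨hmaps hs', hs'U⟩
  exact htends.eventually (hg i _ ⟨hmaps hs, hi⟩)

end IsPrimitiveOn

section IsPrimitiveAlong

variable {Φ Ψ : ℝ → ℝ} {γ δ : ℝ → X} {S T : Set ℝ}

theorem IsPrimitiveAlong.mono (h : ω.IsPrimitiveAlong Φ γ S) (hTS : T ⊆ S) :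
    ω.IsPrimitiveAlong Φ γ T :=
  fun s hs i hi => nhdsWithin_mono s hTS (h s (hTS hs) i hi)

theorem IsPrimitiveAlong.congr (h : ω.IsPrimitiveAlong Φ γ S) (hΦ : EqOn Φ Ψ S)
    (hγ : EqOn γ δ S) : ω.IsPrimitiveAlong Ψ δ S := by
  intro s hs i hi
  rw [← hγ hs] at hi
  filter_upwards [h s hs i hi, self_mem_nhdsWithin] with s' hs' hs'S
  rw [← hΦ hs'S, ← hγ hs'S, ← hΦ hs, ← hγ hs, hs']

theorem IsPrimitiveAlong.add_const (h : ω.IsPrimitiveAlong Φ γ S) (C : ℝ) :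
    ω.IsPrimitiveAlong (fun s => Φ s + C) γ S := by
  intro s hs i hi
  filter_upwards [h s hs i hi] with s' hs'
  linarith

theorem IsPrimitiveAlong.comp {φ : ℝ → ℝ} (h : ω.IsPrimitiveAlong Φ γ T)
    (hφ : ContinuousOn φ S) (hmaps : MapsTo φ S T) : ω.IsPrimitiveAlong (Φ ∘ φ) (γ ∘ φ) S :=
  fun s hs i hi => ((hφ s hs).tendsto_nhdsWithin hmaps).eventually (h (φ s) (hmaps hs) i hi)

theorem IsPrimitiveAlong.union (hS : IsClosed S) (hT : IsClosed T)
    (hΦS : ω.IsPrimitiveAlong Φ γ S) (hΦT : ω.IsPrimitiveAlong Φ γ T) :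
    ω.IsPrimitiveAlong Φ γ (S ∪ T) := by
  -- off a closed set `A` the filter `𝓝[A] s` is trivial
  have hclosed : ∀ {A : Set ℝ}, IsClosed A → ω.IsPrimitiveAlong Φ γ A → ∀ s i, γ s ∈ ω.U i →
      ∀ᶠ s' in 𝓝[A] s, Φ s' - ω.f i (γ s') = Φ s - ω.f i (γ s) := by
    intro A hA hΦA s i hi
    by_cases hs : s ∈ A
    · exact hΦA s hs i hi
    · rw [notMem_closure_iff_nhdsWithin_eq_bot.1 (by rwa [hA.closure_eq])]
      exact eventually_bot
  intro s _ i hi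
  rw [nhdsWithin_union]
  exact eventually_sup.2 ⟨hclosed hS hΦS s i hi, hclosed hT hΦT s i hi⟩

theorem IsPrimitiveAlong.piecewise {a b c : ℝ} (hac : a ≤ c) (hcb : c ≤ b)
    (hΦ : ω.IsPrimitiveAlong Φ γ (Icc a c)) (hΨ : ω.IsPrimitiveAlong Ψ γ (Icc c b)) :
    ω.IsPrimitiveAlong (fun s => if s ≤ c then Φ s else Ψ s + (Φ c - Ψ c)) γ (Icc a b) := by
  rw [← Icc_union_Icc_eq_Icc hac hcb]
  refine IsPrimitiveAlong.union isClosed_Icc isClosed_Icc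
    (hΦ.congr (fun s hs => ?_) (eqOn_refl _ _)) ((hΨ.add_const (Φ c - Ψ c)).congr (fun s hs => ?_) (eqOn_refl _ _))
  · simp [hs.2]
  · rcases hs.1.eq_or_lt with rfl | hlt
    · simp
    · simp [not_le.2 hlt]

theorem IsPrimitiveAlong.sub_eq_sub (hΦ : ω.IsPrimitiveAlong Φ γ S)
    (hΨ : ω.IsPrimitiveAlong Ψ γ S) (hS : IsPreconnected S) {x y : ℝ} (hx : x ∈ S) (hy : y ∈ S) :
    Φ x - Φ y = Ψ x - Ψ y := by
  have hconst : Φ x - Ψ x = Φ y - Ψ y := by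
    refine hS.apply_eq_of_eventually_eq (g := fun s => Φ s - Ψ s) (fun s hs => ?_) hx hy
    obtain ⟨i, hi⟩ := ω.covers (γ s)
    filter_upwards [hΦ s hs i hi, hΨ s hs i hi] with s' h₁ h₂
    linarith
  linarith

end IsPrimitiveAlong

section PathIntegral

variable {Φ : ℝ → ℝ} {γ : ℝ → X} {a b r : ℝ}

theorem IsPathIntegral.eq_sub (h : ω.IsPathIntegral γ a b r) (hγ : ContinuousOn γ (Icc a b))
    (hΦ : ω.IsPrimitiveAlong Φ γ (Icc a b)) : r = Φ b - Φ a := by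
  obtain ⟨n, t, idx, rfl, rfl, hmono, hmem, rfl⟩ := h
  have ht : MonotoneOn t (Iic n) :=
    monotoneOn_of_le_succ ordConnected_Iic fun m _ _ hm => hmono m (Order.succ_le_iff.1 hm)
  have hseg : ∀ m < n, Icc (t m) (t (m + 1)) ⊆ Icc (t 0) (t n) := fun m hm =>
    Icc_subset_Icc (ht (Nat.zero_le n) (mem_Iic.2 hm.le) (Nat.zero_le m)) (ht hm self_mem_Iic hm)
  have hterm : ∀ m < n, ω.f (idx m) (γ (t (m + 1))) - ω.f (idx m) (γ (t m))
      = Φ (t (m + 1)) - Φ (t m) := fun m hm =>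
    ((isPrimitiveOn_f (idx m)).isPrimitiveAlong_comp (hγ.mono (hseg m hm))
      fun s hs => hmem m hm s hs).sub_eq_sub (hΦ.mono (hseg m hm)) isPreconnected_Icc
      (right_mem_Icc.2 (hmono m hm)) (left_mem_Icc.2 (hmono m hm))
  rw [Finset.sum_congr rfl fun m hm => hterm m (Finset.mem_range.1 hm),
    Finset.sum_range_sub (fun m => Φ (t m))]

theorem exists_partition (hab : a ≤ b) (hγ : ContinuousOn γ (Icc a b)) :
    ∃ (t : ℕ → ℝ) (idx : ℕ → ω.ι) (n : ℕ), t 0 = a ∧ Monotone t ∧ (∀ m, t m ≤ b) ∧ t n = b ∧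
      ∀ m, MapsTo γ (Icc (t m) (t (m + 1))) (ω.U (idx m)) := by
  obtain ⟨t, ht0, hmono, ⟨n, htn⟩, hsub⟩ := exists_monotone_Icc_subset_open_cover_Icc hab
    (c := fun i => (Icc a b).domRestrict γ ⁻¹' ω.U i)
    (fun i => hγ.domRestrict.isOpen_preimage _ (ω.isOpen i))
    (fun s _ => mem_iUnion.2 (ω.covers (γ s)))
  choose idx hidx using hsub
  refine ⟨fun m => t m, idx, n, ht0, fun _ _ h => hmono h,
    fun m => (t m).2.2, htn n le_rfl, fun m s hs => ?_⟩
  exact hidx m (a := ⟨s, (t m).2.1.trans hs.1, hs.2.trans (t (m + 1)).2.2⟩) hs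

theorem exists_isPathIntegral (hab : a ≤ b) (hγ : ContinuousOn γ (Icc a b)) :
    ∃ r, ω.IsPathIntegral γ a b r := by
  obtain ⟨t, idx, n, ht0, hmono, -, htn, hmaps⟩ := exists_partition (ω := ω) hab hγ
  exact ⟨_, n, t, idx, ht0, htn, fun m _ => hmono m.le_succ, fun m _ _ hs => hmaps m hs, rfl⟩

theorem exists_isPrimitiveAlong (hab : a ≤ b) (hγ : ContinuousOn γ (Icc a b)) :
    ∃ Φ, ω.IsPrimitiveAlong Φ γ (Icc a b) := by
  obtain ⟨t, idx, n, rfl, hmono, hle, rfl, hmaps⟩ := exists_partition (ω := ω) hab hγ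
  suffices ∀ k, ∃ Φ, ω.IsPrimitiveAlong Φ γ (Icc (t 0) (t k)) from this n
  intro k
  induction k with
  | zero =>
    obtain ⟨i, hi⟩ := ω.covers (γ (t 0))
    rw [Icc_self]
    exact ⟨_, (isPrimitiveOn_f i).isPrimitiveAlong_comp (continuousOn_singleton _ _)
      (mapsTo_singleton.2 hi)⟩
  | succ k ih =>
    obtain ⟨Φ, hΦ⟩ := ih
    have hγk : ContinuousOn γ (Icc (t k) (t (k + 1))) :=
      hγ.mono (Icc_subset_Icc (hmono (Nat.zero_le k)) (hle (k + 1)))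
    exact ⟨_, hΦ.piecewise (hmono (Nat.zero_le k)) (hmono k.le_succ)
      ((isPrimitiveOn_f (idx k)).isPrimitiveAlong_comp hγk (hmaps k))⟩

theorem pathIntegral_eq_sub (hab : a ≤ b) (hγ : ContinuousOn γ (Icc a b))
    (hΦ : ω.IsPrimitiveAlong Φ γ (Icc a b)) : ω.pathIntegral γ a b = Φ b - Φ a := by
  have hex := exists_isPathIntegral (ω := ω) hab hγ
  rw [pathIntegral, dif_pos hex]
  exact hex.choose_spec.eq_sub hγ hΦ

end PathIntegral

section Path

variable {x y z : X}

theorem pathIntegral_symm (p : Path x y) :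
    ω.pathIntegral p.symm.extend 0 1 = -ω.pathIntegral p.extend 0 1 := by
  obtain ⟨Φ, hΦ⟩ := exists_isPrimitiveAlong (ω := ω) zero_le_one p.continuous_extend.continuousOn
  have hΦ' : ω.IsPrimitiveAlong (Φ ∘ (1 - ·)) p.symm.extend (Icc 0 1) := by
    rw [Path.extend_symm]
    exact hΦ.comp (by fun_prop) fun s hs => ⟨by linarith [hs.2], by linarith [hs.1]⟩
  rw [pathIntegral_eq_sub zero_le_one p.symm.continuous_extend.continuousOn hΦ',
    pathIntegral_eq_sub zero_le_one p.continuous_extend.continuousOn hΦ]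
  simp

theorem pathIntegral_trans (p : Path x y) (q : Path y z) :
    ω.pathIntegral (p.trans q).extend 0 1
      = ω.pathIntegral p.extend 0 1 + ω.pathIntegral q.extend 0 1 := by
  obtain ⟨Φ, hΦ⟩ := exists_isPrimitiveAlong (ω := ω) zero_le_one p.continuous_extend.continuousOn
  obtain ⟨Ψ, hΨ⟩ := exists_isPrimitiveAlong (ω := ω) zero_le_one q.continuous_extend.continuousOn
  have hleft : ω.IsPrimitiveAlong (Φ ∘ (2 * ·)) (p.trans q).extend (Icc 0 (1 / 2)) :=
    (hΦ.comp (by fun_prop) fun s hs => ⟨by linarith [hs.1], by linarith [hs.2]⟩).congr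
      (eqOn_refl _ _) fun s hs => (Path.extend_trans_of_le_half p q hs.2).symm
  have hright : ω.IsPrimitiveAlong (Ψ ∘ (2 * · - 1)) (p.trans q).extend (Icc (1 / 2) 1) :=
    (hΨ.comp (by fun_prop) fun s hs => ⟨by linarith [hs.1], by linarith [hs.2]⟩).congr
      (eqOn_refl _ _) fun s hs => (Path.extend_trans_of_half_le p q hs.1).symm
  rw [pathIntegral_eq_sub zero_le_one (p.trans q).continuous_extend.continuousOn
      (hleft.piecewise (by norm_num) (by norm_num) hright),
    pathIntegral_eq_sub zero_le_one p.continuous_extend.continuousOn hΦ,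
    pathIntegral_eq_sub zero_le_one q.continuous_extend.continuousOn hΨ]
  norm_num
  ring

end Path

section Potential

noncomputable def basepoint (x : X) : X := (Quotient.mk (pathSetoid X) x).out

theorem joined_basepoint (x : X) : Joined (basepoint x) x :=
  Quotient.exact (Quotient.out_eq (Quotient.mk (pathSetoid X) x))

theorem basepoint_eq {x y : X} (h : Joined x y) : basepoint x = basepoint y :=
  congrArg Quotient.out (Quotient.sound h)

variable (ω) in
noncomputable def potential (x : X) : ℝ :=
  ω.pathIntegral (joined_basepoint x).somePath.extend 0 1

theorem isPrimitiveOn_potential [LocallyPathConnectedSpace X]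
    (hloops : ∀ γ : ℝ → X, ContinuousOn γ (Icc 0 1) → γ 0 = γ 1 → ω.pathIntegral γ 0 1 = 0) :
    ω.IsPrimitiveOn ω.potential univ := by
  rintro i x ⟨-, hx⟩
  refine nhdsWithin_le_nhds (mem_of_superset
    (((ω.isOpen i).pathComponentIn x).mem_nhds (mem_pathComponentIn_self hx))
    fun y (hxy : JoinedIn (ω.U i) x y) => ?_)
  have hq : ω.pathIntegral hxy.somePath.extend 0 1 = ω.f i y - ω.f i x := by
    have hmaps : MapsTo hxy.somePath.extend (Icc 0 1) (ω.U i) := fun s hs => by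
      rw [Path.extend_apply _ hs]
      exact hxy.somePath_mem _
    rw [pathIntegral_eq_sub zero_le_one hxy.somePath.continuous_extend.continuousOn
      ((isPrimitiveOn_f i).isPrimitiveAlong_comp hxy.somePath.continuous_extend.continuousOn hmaps)]
    simp
  have hloop := hloops _ ((((joined_basepoint x).somePath.trans hxy.somePath).trans
    (joined_basepoint y).somePath.symm).continuous_extend.continuousOn)
    (by simp [basepoint_eq hxy.joined])
  rw [pathIntegral_trans, pathIntegral_trans, pathIntegral_symm, hq] at hloop
  show ω.potential y - ω.f i y = ω.potential x - ω.f i x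
  rw [potential, potential]
  linarith

end Potential

end ClosedOneForm

open ClosedOneForm

/-- **Exactness criterion.**  Let `X` be a locally path-connected topological
space and `ω` a continuous closed 1-form on `X`.  Then there is a continuous
function `f : X → ℝ` with `ω = df` (i.e. `f − f_U` is locally constant on `U`
for every member `U` of the defining cover) if and only if `∫_γ ω = 0` for
every continuous loop `γ : [0,1] → X`, `γ(0) = γ(1)`. -/
theorem exact_iff_all_loop_integrals_vanish
    (X : Type) [TopologicalSpace X] [LocallyPathConnectedSpace X]
    (ω : ClosedOneForm X) :
    (∃ f : X → ℝ, Continuous f ∧ ∀ i, ∀ x ∈ ω.U i, ∃ W, IsOpen W ∧ x ∈ W ∧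
        ∀ y ∈ W ∩ ω.U i, f y - ω.f i y = f x - ω.f i x) ↔
    (∀ γ : ℝ → X, ContinuousOn γ (Set.Icc (0 : ℝ) 1) → γ 0 = γ 1 →
        ω.pathIntegral γ 0 1 = 0) := by
  constructor
  · rintro ⟨f, -, hf⟩ γ hγ hloop
    have hΦ := (isPrimitiveOn_univ_iff.2 hf).isPrimitiveAlong_comp hγ (mapsTo_univ _ _)
    rw [pathIntegral_eq_sub zero_le_one hγ hΦ, Function.comp_apply, Function.comp_apply, hloop,
      sub_self]
  · intro hloops
    have hF := isPrimitiveOn_potential hloops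
    exact ⟨ω.potential, continuousOn_univ.1 (hF.continuousOn isOpen_univ),
      isPrimitiveOn_univ_iff.1 hF⟩
end

section
/- Let X be a compact topological space, let ω be a continuous closed 1-form on X, let f : X → ℝ be a continuous function, and let ω' = ω + df be the closed 1-form obtained by adding f|_U to each f_U. Then cat(X, ω) = cat(X, ω'). In particular, for a finite CW complex X, cat(X, ω) depends only on the cohomology class of ω. -/
open Set

namespace ClosedOneForm

variable {X Y : Type} [TopologicalSpace X] [TopologicalSpace Y]

/-- The pullback `φ*ω` of a closed 1-form along a continuous map `φ : Y → X`,
given by the cover `{φ⁻¹(U)}` and the functions `f_U ∘ φ`. -/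
def pullback (ω : ClosedOneForm X) (φ : Y → X) (hφ : Continuous φ) :
    ClosedOneForm Y where
  ι := ω.ι
  U i := φ ⁻¹' ω.U i
  isOpen i := (ω.isOpen i).preimage hφ
  covers y := ω.covers (φ y)
  f i := ω.f i ∘ φ
  cont i := (ω.cont i).comp hφ.continuousOn (fun _ h => h)
  locConst := by
    intro i j y hy
    obtain ⟨W, hWo, hxW, hW⟩ := ω.locConst i j (φ y) hy
    exact ⟨φ ⁻¹' W, hWo.preimage hφ, hxW, fun z hz => hW (φ z) hz⟩

/-- The sum `ω₁ + ω₂` of two closed 1-forms on `X`, given on the common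
refinement of the two covers by the sums of the local functions. -/
def add (ω₁ ω₂ : ClosedOneForm X) : ClosedOneForm X where
  ι := ω₁.ι × ω₂.ι
  U p := ω₁.U p.1 ∩ ω₂.U p.2
  isOpen p := (ω₁.isOpen p.1).inter (ω₂.isOpen p.2)
  covers x := by
    obtain ⟨i, hi⟩ := ω₁.covers x
    obtain ⟨j, hj⟩ := ω₂.covers x
    exact ⟨(i, j), hi, hj⟩
  f p x := ω₁.f p.1 x + ω₂.f p.2 x
  cont p := ((ω₁.cont p.1).mono Set.inter_subset_left).add
    ((ω₂.cont p.2).mono Set.inter_subset_right)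
  locConst := by
    intro p q x hx
    obtain ⟨W₁, h1o, h1x, h1⟩ := ω₁.locConst p.1 q.1 x ⟨hx.1.1, hx.2.1⟩
    obtain ⟨W₂, h2o, h2x, h2⟩ := ω₂.locConst p.2 q.2 x ⟨hx.1.2, hx.2.2⟩
    refine ⟨W₁ ∩ W₂, h1o.inter h2o, ⟨h1x, h2x⟩, fun y hy => ?_⟩
    have e1 := h1 y ⟨hy.1.1, hy.2.1.1, hy.2.2.1⟩
    have e2 := h2 y ⟨hy.1.2, hy.2.1.2, hy.2.2.2⟩
    try dsimp only at e1 e2 ⊢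
    linarith

/-- The closed 1-form `ω + dg` obtained from `ω` by adding the differential of
a continuous function `g : X → ℝ`, i.e. adding `g|_U` to each local function. -/
def addFun (ω : ClosedOneForm X) (g : X → ℝ) (hg : Continuous g) :
    ClosedOneForm X where
  ι := ω.ι
  U := ω.U
  isOpen := ω.isOpen
  covers := ω.covers
  f i x := ω.f i x + g x
  cont i := (ω.cont i).add hg.continuousOn
  locConst := by
    intro i j x hx
    obtain ⟨W, hWo, hWx, hW⟩ := ω.locConst i j x hx
    refine ⟨W, hWo, hWx, fun y hy => ?_⟩
    have := hW y hy
    try dsimp only at this ⊢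
    linarith

end ClosedOneForm

/-!
Along any path, the integral of `ω + df` differs from that of `ω` by the increment of `f`
between the endpoints, which on a compact space is bounded by `2 sup |f|`. Hence a set that is
`(N + 2 sup |f|)`-movable for one form is `N`-movable for the other, and the two defining sets
of `cat(X, -)` coincide. The real work is that the line integral does not depend on the
partition, which uses that the difference of two local primitives is constant along any
connected piece of a path lying in both charts.
-/

namespace ClosedOneForm

variable {X : Type} [TopologicalSpace X] {ω : ClosedOneForm X} {γ : ℝ → X}
  {n n' : ℕ} {a b r r' : ℝ}

theorem sub_eq_sub_of_isPreconnected (ω : ClosedOneForm X) {i j : ω.ι} {S : Set X}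
    (hS : IsPreconnected S) (hSU : S ⊆ ω.U i ∩ ω.U j) {x y : X} (hx : x ∈ S)
    (hy : y ∈ S) : ω.f i x - ω.f j x = ω.f i y - ω.f j y := by
  have := isPreconnected_iff_preconnectedSpace.mp hS
  have hlc : IsLocallyConstant fun z : S => ω.f i z - ω.f j z := by
    rw [IsLocallyConstant.iff_exists_open]
    intro z
    obtain ⟨W, hWo, hzW, hW⟩ := ω.locConst i j z (hSU z.2)
    exact ⟨((↑) : S → X) ⁻¹' W, hWo.preimage continuous_subtype_val, hzW,
      fun w hw => hW w ⟨hw, hSU w.2⟩⟩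
  exact hlc.apply_eq_of_preconnectedSpace ⟨x, hx⟩ ⟨y, hy⟩

def IsPartitionSum (ω : ClosedOneForm X) (γ : ℝ → X) (n : ℕ) (a b r : ℝ) : Prop :=
  ∃ (t : ℕ → ℝ) (idx : ℕ → ω.ι),
    t 0 = a ∧ t n = b ∧ (∀ m < n, t m ≤ t (m + 1)) ∧
    (∀ m < n, ∀ s ∈ Icc (t m) (t (m + 1)), γ s ∈ ω.U (idx m)) ∧
    r = ∑ m ∈ Finset.range n, (ω.f (idx m) (γ (t (m + 1))) - ω.f (idx m) (γ (t m)))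

theorem isPathIntegral_iff_exists_isPartitionSum :
    ω.IsPathIntegral γ a b r ↔ ∃ n, ω.IsPartitionSum γ n a b r :=
  Iff.rfl

theorem isPartitionSum_zero : ω.IsPartitionSum γ 0 a b r ↔ a = b ∧ r = 0 := by
  constructor
  · rintro ⟨t, idx, h0, hn, -, -, rfl⟩
    exact ⟨h0.symm.trans hn, rfl⟩
  · rintro ⟨rfl, rfl⟩
    exact ⟨fun _ => a, fun _ => (ω.covers (γ a)).choose, rfl, rfl, by simp, by simp, rfl⟩

theorem isPartitionSum_succ :
    ω.IsPartitionSum γ (n + 1) a b r ↔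
      ∃ c i r₀, ω.IsPartitionSum γ n a c r₀ ∧ c ≤ b ∧ MapsTo γ (Icc c b) (ω.U i) ∧
        r = r₀ + (ω.f i (γ b) - ω.f i (γ c)) := by
  constructor
  · rintro ⟨t, idx, h0, hn, hmono, hU, rfl⟩
    refine ⟨t n, idx n, _, ⟨t, idx, h0, rfl, fun m hm => hmono m (by omega),
      fun m hm => hU m (by omega), rfl⟩, hn ▸ hmono n n.lt_succ_self,
      fun s hs => hU n n.lt_succ_self s (hn ▸ hs), by rw [Finset.sum_range_succ, hn]⟩
  · rintro ⟨c, i, r₀, ⟨t, idx, h0, hn, hmono, hU, rfl⟩, hcb, hi, rfl⟩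
    have ht : ∀ m ≤ n, Function.update t (n + 1) b m = t m := fun m hm =>
      Function.update_of_ne (by omega) _ _
    have hidx : ∀ m < n, Function.update idx n i m = idx m := fun m hm =>
      Function.update_of_ne (by omega) _ _
    refine ⟨Function.update t (n + 1) b, Function.update idx n i, by rw [ht 0 n.zero_le, h0],
      Function.update_self .., fun m hm => ?_, fun m hm => ?_, ?_⟩
    · rcases Nat.lt_succ_iff_lt_or_eq.mp hm with hm | rfl
      · rw [ht m hm.le, ht (m + 1) hm]
        exact hmono m hm
      · rw [ht m le_rfl, Function.update_self, hn]
        exact hcb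
    · rcases Nat.lt_succ_iff_lt_or_eq.mp hm with hm | rfl
      · rw [ht m hm.le, ht (m + 1) hm, hidx m hm]
        exact hU m hm
      · rw [ht m le_rfl, Function.update_self, Function.update_self, hn]
        exact hi
    · rw [Finset.sum_range_succ, ht n le_rfl, Function.update_self, Function.update_self, hn]
      congr 1
      refine Finset.sum_congr rfl fun m hm => ?_
      rw [Finset.mem_range] at hm
      rw [ht m hm.le, ht (m + 1) hm, hidx m hm]

theorem IsPartitionSum.le (h : ω.IsPartitionSum γ n a b r) : a ≤ b := by
  induction n generalizing b r with
  | zero => exact (isPartitionSum_zero.mp h).1.le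
  | succ n ih =>
    obtain ⟨c, _, _, h₀, hcb, -⟩ := isPartitionSum_succ.mp h
    exact (ih h₀).trans hcb

theorem IsPartitionSum.eq_zero_of_eq (h : ω.IsPartitionSum γ n a a r) : r = 0 := by
  induction n generalizing r with
  | zero => exact (isPartitionSum_zero.mp h).2
  | succ n ih =>
    obtain ⟨c, _, r₀, h₀, hca, -, rfl⟩ := isPartitionSum_succ.mp h
    obtain rfl : c = a := le_antisymm hca h₀.le
    rw [ih h₀]
    ring

/-- Independence of the partition, by induction on the total number of intervals: of the two
last intervals, the shorter one lies in both chosen charts, where the two local primitives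
differ by a constant, so it can be cut off from both partitions. -/
theorem IsPartitionSum.unique (hc : ContinuousOn γ (Icc a b))
    (h : ω.IsPartitionSum γ n a b r) (h' : ω.IsPartitionSum γ n' a b r') : r = r' := by
  induction hN : n + n' using Nat.strong_induction_on generalizing n n' b r r' with
  | _ N ih =>
  subst hN
  rcases n with _ | n
  · obtain ⟨rfl, rfl⟩ := isPartitionSum_zero.mp h
    exact h'.eq_zero_of_eq.symm
  rcases n' with _ | n'
  · obtain ⟨rfl, rfl⟩ := isPartitionSum_zero.mp h'
    exact h.eq_zero_of_eq
  obtain ⟨c, i, r₀, h₀, hcb, hi, rfl⟩ := isPartitionSum_succ.mp h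
  obtain ⟨c', j, r₀', h₀', hc'b, hj, rfl⟩ := isPartitionSum_succ.mp h'
  clear h h'
  wlog hcc' : c ≤ c' generalizing n n' c c' i j r₀ r₀'
  · exact (this n' n (fun m hm => ih m (by omega)) c' j r₀' h₀' hc'b hj
      c i r₀ h₀ hcb hi (le_of_not_ge hcc')).symm
  have hextend : ω.IsPartitionSum γ (n + 1) a c' (r₀ + (ω.f i (γ c') - ω.f i (γ c))) :=
    isPartitionSum_succ.mpr
      ⟨c, i, r₀, h₀, hcc', hi.mono (Icc_subset_Icc_right hc'b) le_rfl, rfl⟩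
  have hinit := ih _ (by omega) (hc.mono (Icc_subset_Icc_right hc'b)) hextend h₀' rfl
  have hlast := ω.sub_eq_sub_of_isPreconnected (isPreconnected_Icc.image γ
      (hc.mono (Icc_subset_Icc_left (h₀.le.trans hcc'))))
    (image_subset_iff.mpr fun s hs => ⟨hi ⟨hcc'.trans hs.1, hs.2⟩, hj hs⟩)
    (mem_image_of_mem γ ⟨hc'b, le_rfl⟩) (mem_image_of_mem γ ⟨le_rfl, hc'b⟩)
  linarith

theorem IsPathIntegral.pathIntegral_eq (hc : ContinuousOn γ (Icc a b))
    (h : ω.IsPathIntegral γ a b r) : ω.pathIntegral γ a b = r := by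
  have hex : ∃ r, ω.IsPathIntegral γ a b r := ⟨r, h⟩
  rw [pathIntegral, dif_pos hex]
  obtain ⟨n, hn⟩ := isPathIntegral_iff_exists_isPartitionSum.mp hex.choose_spec
  obtain ⟨n', hn'⟩ := isPathIntegral_iff_exists_isPartitionSum.mp h
  exact hn.unique hc hn'

theorem exists_isPathIntegral_of_pathIntegral_ne_zero (h : ω.pathIntegral γ a b ≠ 0) :
    ∃ r, ω.IsPathIntegral γ a b r := by
  by_contra hne
  exact h (dif_neg hne)

section addFun

variable {g : X → ℝ} {hg : Continuous g}

theorem isPartitionSum_addFun_iff :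
    (ω.addFun g hg).IsPartitionSum γ n a b r ↔
      ω.IsPartitionSum γ n a b (r - (g (γ b) - g (γ a))) := by
  refine exists_congr fun t => exists_congr fun idx => ?_
  refine and_congr_right fun h0 => and_congr_right fun hn => and_congr_right fun _ =>
    and_congr_right fun _ => ?_
  have htelescope : ∑ m ∈ Finset.range n,
      ((ω.addFun g hg).f (idx m) (γ (t (m + 1))) - (ω.addFun g hg).f (idx m) (γ (t m))) =
      ∑ m ∈ Finset.range n, (ω.f (idx m) (γ (t (m + 1))) - ω.f (idx m) (γ (t m))) +
        (g (γ b) - g (γ a)) := by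
    rw [← h0, ← hn, ← Finset.sum_range_sub (fun m => g (γ (t m))),
      ← Finset.sum_add_distrib]
    refine Finset.sum_congr rfl fun m _ => ?_
    simp only [addFun]
    ring
  rw [htelescope]
  constructor <;> intro h <;> linarith

theorem exists_isPathIntegral_addFun_iff :
    (∃ r, (ω.addFun g hg).IsPathIntegral γ a b r) ↔ ∃ r, ω.IsPathIntegral γ a b r := by
  simp only [isPathIntegral_iff_exists_isPartitionSum, isPartitionSum_addFun_iff]
  exact ⟨fun ⟨_, n, h⟩ => ⟨_, n, h⟩,
    fun ⟨r, n, h⟩ => ⟨r + (g (γ b) - g (γ a)), n, by simpa⟩⟩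

theorem pathIntegral_addFun (hc : ContinuousOn γ (Icc a b))
    (hex : ∃ r, ω.IsPathIntegral γ a b r) :
    (ω.addFun g hg).pathIntegral γ a b = ω.pathIntegral γ a b + (g (γ b) - g (γ a)) := by
  obtain ⟨r, n, h⟩ := (exists_isPathIntegral_addFun_iff (hg := hg)).mpr hex
  rw [IsPathIntegral.pathIntegral_eq hc ⟨n, h⟩,
    IsPathIntegral.pathIntegral_eq hc ⟨n, isPartitionSum_addFun_iff.mp h⟩]
  ring

theorem abs_pathIntegral_addFun_sub_le {M : ℝ} (hM : ∀ x, |g x| ≤ M)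
    (hc : ContinuousOn γ (Icc a b)) (hex : ∃ r, ω.IsPathIntegral γ a b r) :
    |(ω.addFun g hg).pathIntegral γ a b - ω.pathIntegral γ a b| ≤ 2 * M := by
  rw [pathIntegral_addFun hc hex, add_sub_cancel_left]
  linarith [abs_sub (g (γ b)) (g (γ a)), hM (γ a), hM (γ b)]

end addFun

theorem NMovable.of_pathIntegral_le {ω' : ClosedOneForm X} {A : Set X} {N N' : ℝ}
    (h : ∀ γ : ℝ → X, ContinuousOn γ (Icc 0 1) →
      ω.pathIntegral γ 0 1 ≤ -N' → ω'.pathIntegral γ 0 1 ≤ -N)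
    (hA : ω.NMovable A N') : ω'.NMovable A N := by
  obtain ⟨H, hH, hH0, hHint⟩ := hA
  refine ⟨H, hH, hH0, fun x hx => h _ ?_ (hHint x hx)⟩
  exact hH.comp (continuous_const.prodMk continuous_id).continuousOn fun t ht => ⟨hx, ht⟩

theorem catForm_eq_of_nmovable {ω' : ClosedOneForm X}
    (h : ∀ N > 0, ∃ N' > 0, ∀ A, ω.NMovable A N' → ω'.NMovable A N)
    (h' : ∀ N > 0, ∃ N' > 0, ∀ A, ω'.NMovable A N' → ω.NMovable A N) :
    ω.catForm = ω'.catForm := by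
  have key : ∀ {ω ω' : ClosedOneForm X},
      (∀ N > 0, ∃ N' > 0, ∀ A, ω.NMovable A N' → ω'.NMovable A N) → ∀ k : ℕ,
      (∀ N : ℝ, 0 < N → ∃ A : Set X, IsClosed A ∧ ω.NMovable A N ∧ CatLE X Aᶜ k) →
      ∀ N : ℝ, 0 < N → ∃ A : Set X, IsClosed A ∧ ω'.NMovable A N ∧ CatLE X Aᶜ k := by
    intro ω ω' h k hk N hN
    obtain ⟨N', hN', hmov⟩ := h N hN
    obtain ⟨A, hAc, hA, hAcat⟩ := hk N' hN'
    exact ⟨A, hAc, hmov A hA, hAcat⟩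
  unfold catForm
  congr 1
  ext k
  exact ⟨key h k, key h' k⟩

theorem NMovable.addFun {g : X → ℝ} (hg : Continuous g) {M : ℝ} (hM : ∀ x, |g x| ≤ M)
    (hM0 : 0 ≤ M) {A : Set X} {N : ℝ} (hN : 0 < N) (hA : ω.NMovable A (N + 2 * M)) :
    (ω.addFun g hg).NMovable A N := by
  refine hA.of_pathIntegral_le fun γ hc hle => ?_
  have hex := exists_isPathIntegral_of_pathIntegral_ne_zero
    (by linarith : ω.pathIntegral γ 0 1 ≠ 0)
  linarith [abs_le.mp (abs_pathIntegral_addFun_sub_le (hg := hg) hM hc hex)]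

theorem NMovable.of_addFun {g : X → ℝ} {hg : Continuous g} {M : ℝ} (hM : ∀ x, |g x| ≤ M)
    (hM0 : 0 ≤ M) {A : Set X} {N : ℝ} (hN : 0 < N)
    (hA : (ω.addFun g hg).NMovable A (N + 2 * M)) : ω.NMovable A N := by
  refine hA.of_pathIntegral_le fun γ hc hle => ?_
  have hex := exists_isPathIntegral_addFun_iff.mp <| exists_isPathIntegral_of_pathIntegral_ne_zero
    (by linarith : (ω.addFun g hg).pathIntegral γ 0 1 ≠ 0)
  linarith [abs_le.mp (abs_pathIntegral_addFun_sub_le (hg := hg) hM hc hex)]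

end ClosedOneForm

/-- **`cat(X, ω)` depends only on the cohomology class of `ω`.**  Let `X` be a
compact topological space, `ω` a continuous closed 1-form on `X`, `f : X → ℝ`
continuous and `ω' = ω + df`.  Then `cat(X, ω) = cat(X, ω')`. -/
theorem catForm_eq_of_addFun
    (X : Type) [TopologicalSpace X] [CompactSpace X]
    (ω : ClosedOneForm X) (f : X → ℝ) (hf : Continuous f) :
    ω.catForm = (ω.addFun f hf).catForm := by
  obtain ⟨C, hC⟩ := isCompact_univ.exists_bound_of_continuousOn hf.continuousOn
  have hM : ∀ x, |f x| ≤ max C 0 := fun x => (hC x (mem_univ x)).trans (le_max_left C 0)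
  have hM0 : 0 ≤ max C 0 := le_max_right C 0
  refine ω.catForm_eq_of_nmovable (fun N hN => ⟨N + 2 * max C 0, by positivity, ?_⟩)
    (fun N hN => ⟨N + 2 * max C 0, by positivity, ?_⟩)
  · exact fun A hA => hA.addFun hf hM hM0 hN
  · exact fun A hA => hA.of_addFun hM hM0 hN
end
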